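/- Let S be even. The polynomial T_S(1 + z/S²) - 1 factors as c·z·(z + 2S²)·∏_{j=1}^{S/2 - 1}(z - x_j)² for some nonzero real constant c, where x_j = S²(cos(2jπ/S) - 1). -/

import Mathlib

/-!
With `S = 2m`, the identity `T_{2m} - 1 = 2 (X² - 1) U_{m-1}²` holds because
`cos 2mθ - 1 = -2 sin² mθ` and `sin mθ = sin θ · U_{m-1}(cos θ)`. The roots of `U_{m-1}` are
the simple roots `cos (jπ/m)`, `1 ≤ j ≤ m - 1`, and the substitution `x = 1 + z/S²` sends `x = 1`,
`x = -1` and `x = cos (jπ/m)` to `z = 0`, `z = -2S²` and `z = x_j`.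
-/

open Real Polynomial

namespace Polynomial.Chebyshev

theorem T_real_two_mul_sub_one (n : ℤ) :
    T ℝ (2 * n) - 1 = 2 * (X ^ 2 - 1) * U ℝ (n - 1) ^ 2 := by
  refine eq_of_infinite_eval_eq _ _
    ((Set.Icc_infinite (by norm_num : (-1 : ℝ) < 1)).mono fun x hx ↦ ?_)
  rw [← cos_arccos hx.1 hx.2]
  set θ := arccos x
  have hU := U_real_cos θ (n - 1)
  have hsin := sin_sq_add_cos_sq θ
  simp only [Set.mem_ofPred_eq, eval_sub, eval_mul, eval_pow, eval_one, eval_X, eval_ofNat,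
    T_real_cos]
  push_cast at hU
  rw [sub_add_cancel] at hU
  rw [Int.cast_mul, Int.cast_ofNat, mul_assoc, cos_two_mul, cos_sq' (n * θ), ← hU]
  linear_combination (-2 * eval (cos θ) (U ℝ (n - 1)) ^ 2) * hsin

theorem U_real_eq_prod (n : ℕ) :
    U ℝ n = Polynomial.C (2 ^ n) *
      ∏ j ∈ Finset.Icc 1 n, (X - Polynomial.C (cos (j * π / (n + 1)))) := by
  have hinj := (Finset.range n).nodup_map_iff_injOn.mp (roots_U_real_nodup n)
  have hcard : Multiset.card (U ℝ n).roots = (U ℝ n).natDegree := by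
    rw [roots_U_real, natDegree_U_natCast, Finset.card_val, Finset.card_image_of_injOn hinj,
      Finset.card_range]
  rw [← C_leadingCoeff_mul_prod_multiset_X_sub_C hcard, leadingCoeff_U_natCast, roots_U_real,
    Finset.image_val_of_injOn hinj, Multiset.map_map, ← Finset.prod_eq_multiset_prod,
    ← Finset.Ico_add_one_right_eq_Icc, Finset.prod_Ico_eq_prod_range, Nat.add_sub_cancel]
  simp [add_comm]

end Polynomial.Chebyshev

section AffineSubstitution

variable {K : Type*} [Field K] {a : K}

theorem X_sub_C_comp_one_add_C_mul_X (ha : a ≠ 0) (r : K) :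
    (X - C r).comp (1 + C a * X) = C a * (X - C ((r - 1) / a)) := by
  rw [sub_comp, X_comp, C_comp, mul_sub, ← C_mul, mul_div_cancel₀ _ ha, C_sub, C_1]
  ring

theorem prod_X_sub_C_comp_one_add_C_mul_X (ha : a ≠ 0) {ι : Type*} (s : Finset ι)
    (r : ι → K) :
    (∏ i ∈ s, (X - C (r i))).comp (1 + C a * X) =
      C (a ^ s.card) * ∏ i ∈ s, (X - C ((r i - 1) / a)) := by
  simp only [prod_comp, X_sub_C_comp_one_add_C_mul_X ha, Finset.prod_mul_distrib,
    Finset.prod_const, C_pow]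

theorem X_sq_sub_one_comp_one_add_C_mul_X (ha : a ≠ 0) :
    (X ^ 2 - 1 : K[X]).comp (1 + C a * X) = C (a ^ 2) * (X * (X + C (2 / a))) := by
  have h : C a ^ 2 * C (2 / a) = 2 * C a := by
    rw [← C_pow, ← C_mul, sq, mul_assoc, mul_div_cancel₀ _ ha, C_mul, C_ofNat, mul_comm]
  rw [sub_comp, pow_comp, X_comp, one_comp, C_pow]
  linear_combination (-X) * h

end AffineSubstitution

theorem stmt10 (S : ℕ) (hS : 0 < S) (hSe : Even S) :
    ∃ c : ℝ, c ≠ 0 ∧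
      (Polynomial.Chebyshev.T ℝ (S : ℤ)).comp
          (1 + Polynomial.C (((S : ℝ) ^ 2)⁻¹) * Polynomial.X) - 1 =
        Polynomial.C c * (Polynomial.X * (Polynomial.X + Polynomial.C (2 * (S : ℝ) ^ 2)) *
          ∏ j ∈ Finset.Icc 1 (S / 2 - 1),
            (Polynomial.X -
              Polynomial.C ((S : ℝ) ^ 2 * (Real.cos (2 * j * Real.pi / S) - 1))) ^ 2) := by
  obtain ⟨n, rfl⟩ : ∃ n, S = 2 * (n + 1) := by
    obtain ⟨m, rfl⟩ := hSe
    exact ⟨m - 1, by omega⟩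
  set a : ℝ := (((2 * (n + 1) : ℕ) : ℝ) ^ 2)⁻¹
  have ha : a ≠ 0 := by positivity
  have hT := congrArg (·.comp (1 + C a * X)) (Chebyshev.T_real_two_mul_sub_one (n + 1))
  rw [sub_comp, one_comp, mul_comp, mul_comp, pow_comp, ofNat_comp, add_sub_cancel_right] at hT
  push_cast
  refine ⟨2 * a ^ 2 * (2 ^ n * a ^ n) ^ 2, by positivity, ?_⟩
  rw [hT, X_sq_sub_one_comp_one_add_C_mul_X ha, Chebyshev.U_real_eq_prod, mul_comp, C_comp,
    prod_X_sub_C_comp_one_add_C_mul_X ha, Nat.card_Icc, Finset.prod_pow]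
  have hdiv (y : ℝ) : y / a = (2 * (n + 1)) ^ 2 * y := by
    simp only [a, div_inv_eq_mul]; push_cast; ring
  have hangle (i : ℕ) : (i : ℝ) * π / (n + 1) = 2 * i * π / (2 * (n + 1)) := by
    field_simp
  rw [show 2 * (n + 1) / 2 - 1 = n by omega, Nat.add_sub_cancel]
  simp only [hdiv, hangle]
  generalize (∏ j ∈ Finset.Icc 1 n, _ : ℝ[X]) = P
  simp only [map_mul, map_pow, map_ofNat, Nat.cast_ofNat]
  ring
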